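/- arXiv:2412.08408 — 2 statements merged into one kernel-verified Lean document; each statement's English description precedes it below -/
import Mathlib

section
/- For every integer n ≥ 3 and with m_n equal to either (3/2)n(n+3) or (n/2)(3n² + 14n + 9), the following chain of strict inequalities holds: MS(n) > C(n, m_n) > S(n,2) > AT(n,2), where MS(n) = 4^{n+1}/ω_n^{1/n}, C(n,m) = max{ (1/n)(m ω_m / ((n+m) ω_{n+m}))^{1/n}, 1/(n ω_n^{1/n}) }, S(n,2) = π^{-1/2} (n-1)/(n(n-2)) · (Γ(n)/Γ(n/2))^{1/n}, and AT(n,2) = π^{-1/2} (n(n-2))^{-1/2} (Γ(n)/Γ(n/2))^{1/n}. -/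
/-!
The half-step bounds `Γ(x) √(x - 1/2) ≤ Γ(x + 1/2) ≤ Γ(x) √x`, which follow from the
log-convexity of `Γ`, give two-sided estimates of the ratios `Γ(x + k/2) / Γ(x)`.
Since `ω_m / ω_{n+m} = π^{-n/2} Γ(m/2 + 1 + n/2) / Γ(m/2 + 1)`, the first branch of `C(n, m)`
is `π^{-1/2} / n` times the `n`-th root of `m/(n+m) · Γ(m/2 + 1 + n/2) / Γ(m/2 + 1)`, which lies
between `m/(n+m) · (m/2 + 1/2)^{n/2}` and `((n+m)/2 + 1)^{n/2}`. For `m ≤ n(3n² + 14n + 9)/2` this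
keeps `C(n, m)` below `MS(n)`. On the same scale `S(n,2)` corresponds to
`((n-1)/(n-2))^n Γ(n) / Γ(n/2) ≤ 8 n^{n/2}`, which is beaten as soon as `m ≥ 3n(n+3)/2`.
Finally `S(n,2) > AT(n,2)` reduces to `(n-1)² > n(n-2)`.
-/

open Real

/-- The Lebesgue volume of the unit ball in `ℝ^k`. -/
noncomputable def ballVol (k : ℕ) : ℝ := Real.pi ^ ((k : ℝ) / 2) / Real.Gamma ((k : ℝ) / 2 + 1)

/-- The Michael–Simon constant. -/
noncomputable def MS (n : ℕ) : ℝ := 4 ^ (n + 1) / ballVol n ^ ((1 : ℝ) / n)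

/-- The Brendle constant. -/
noncomputable def Cnm (n m : ℕ) : ℝ :=
  max ((1 / (n : ℝ)) * ((m : ℝ) * ballVol m / (((n : ℝ) + m) * ballVol (n + m))) ^ ((1 : ℝ) / n))
    (1 / ((n : ℝ) * ballVol n ^ ((1 : ℝ) / n)))

/-- The minimal-submanifold Sobolev constant at `p = 2`. -/
noncomputable def S2 (n : ℕ) : ℝ :=
  Real.pi ^ (-(1 : ℝ) / 2) * ((n : ℝ) - 1) / ((n : ℝ) * ((n : ℝ) - 2)) *
    (Real.Gamma (n : ℝ) / Real.Gamma ((n : ℝ) / 2)) ^ ((1 : ℝ) / n)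

/-- The Aubin–Talenti constant at `p = 2`. -/
noncomputable def AT2 (n : ℕ) : ℝ :=
  Real.pi ^ (-(1 : ℝ) / 2) * ((n : ℝ) * ((n : ℝ) - 2)) ^ (-(1 : ℝ) / 2) *
    (Real.Gamma (n : ℝ) / Real.Gamma ((n : ℝ) / 2)) ^ ((1 : ℝ) / n)

theorem Real.Gamma_add_half_le {x : ℝ} (hx : 0 < x) : Gamma (x + 1 / 2) ≤ Gamma x * √x := by
  have hΓ := Gamma_pos_of_pos hx
  calc Gamma (x + 1 / 2) = Gamma (1 / 2 * x + 1 / 2 * (x + 1)) := by ring_nf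
    _ ≤ Gamma x ^ (1 / 2 : ℝ) * Gamma (x + 1) ^ (1 / 2 : ℝ) :=
      Gamma_mul_add_mul_le_rpow_Gamma_mul_rpow_Gamma hx (by linarith) (by norm_num)
        (by norm_num) (by norm_num)
    _ = Gamma x * √x := by
      rw [Gamma_add_one hx.ne', ← sqrt_eq_rpow, ← sqrt_eq_rpow, sqrt_mul' _ hΓ.le]
      linear_combination √x * mul_self_sqrt hΓ.le

theorem Real.Gamma_mul_sqrt_le_Gamma_add_half {x : ℝ} (hx : 1 / 2 < x) :
    Gamma x * √(x - 1 / 2) ≤ Gamma (x + 1 / 2) := by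
  have hy : 0 < x - 1 / 2 := by linarith
  have h := Gamma_add_half_le hy
  rw [sub_add_cancel] at h
  calc Gamma x * √(x - 1 / 2) ≤ Gamma (x - 1 / 2) * √(x - 1 / 2) * √(x - 1 / 2) := by gcongr
    _ = Gamma (x + 1 / 2) := by
      rw [mul_assoc, mul_self_sqrt hy.le, mul_comm, ← Gamma_add_one hy.ne']
      ring_nf

theorem Real.Gamma_add_half_nat_le {x : ℝ} (hx : 0 < x) (k : ℕ) :
    Gamma (x + k / 2) ≤ Gamma x * √(x + k / 2) ^ k := by
  induction k with
  | zero => simp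
  | succ k ih =>
    have hk : x + (k + 1 : ℕ) / 2 = x + k / 2 + 1 / 2 := by push_cast; ring
    have hmono : √(x + k / 2) ≤ √(x + (k + 1 : ℕ) / 2) := by
      gcongr; norm_num
    calc Gamma (x + (k + 1 : ℕ) / 2) ≤ Gamma (x + k / 2) * √(x + k / 2) := by
          rw [hk]; exact Gamma_add_half_le (by positivity)
      _ ≤ Gamma x * √(x + k / 2) ^ k * √(x + k / 2) := by gcongr
      _ ≤ Gamma x * √(x + (k + 1 : ℕ) / 2) ^ k * √(x + (k + 1 : ℕ) / 2) := by
          have := (Gamma_pos_of_pos hx).le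
          gcongr
      _ = Gamma x * √(x + (k + 1 : ℕ) / 2) ^ (k + 1) := by ring

theorem Real.Gamma_mul_sqrt_pow_le_Gamma_add_half_nat {x : ℝ} (hx : 1 / 2 < x) (k : ℕ) :
    Gamma x * √(x - 1 / 2) ^ k ≤ Gamma (x + k / 2) := by
  induction k with
  | zero => simp
  | succ k ih =>
    have hk : x + (k + 1 : ℕ) / 2 = x + k / 2 + 1 / 2 := by push_cast; ring
    have hxk : 1 / 2 < x + k / 2 := by linarith [show (0 : ℝ) ≤ k / 2 by positivity]
    calc Gamma x * √(x - 1 / 2) ^ (k + 1)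
        = Gamma x * √(x - 1 / 2) ^ k * √(x - 1 / 2) := by ring
      _ ≤ Gamma (x + k / 2) * √(x + k / 2 - 1 / 2) := by
          have := (Gamma_pos_of_pos (s := x + k / 2) (by linarith)).le
          gcongr; linarith [show (0 : ℝ) ≤ k / 2 by positivity]
      _ ≤ Gamma (x + (k + 1 : ℕ) / 2) := by rw [hk]; exact Gamma_mul_sqrt_le_Gamma_add_half hxk

theorem Real.one_le_Gamma_of_two_le {x : ℝ} (hx : 2 ≤ x) : 1 ≤ Gamma x :=
  Gamma_two ▸ Gamma_strictMonoOn_Ici.monotoneOn (Set.mem_Ici.2 le_rfl) (Set.mem_Ici.2 hx) hx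

lemma sub_one_div_sub_two_pow_le_eight {n : ℕ} (hn : 3 ≤ n) :
    (((n : ℝ) - 1) / ((n : ℝ) - 2)) ^ n ≤ 8 := by
  obtain rfl | hn4 := hn.eq_or_lt
  · norm_num
  have hN : (4 : ℝ) ≤ n := by exact_mod_cast hn4
  have hd : (0 : ℝ) < (n : ℝ) - 2 := by linarith
  have hc : ((n : ℝ) - 1) / ((n : ℝ) - 2) = 1 / ((n : ℝ) - 2) + 1 := by field_simp; ring
  calc (((n : ℝ) - 1) / ((n : ℝ) - 2)) ^ n ≤ exp (1 / ((n : ℝ) - 2)) ^ n := by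
        rw [hc]; gcongr; exact add_one_le_exp _
    _ = exp (n / ((n : ℝ) - 2)) := by rw [← exp_nat_mul, mul_one_div]
    _ ≤ exp 2 := by gcongr; rw [div_le_iff₀ hd]; linarith
    _ = exp 1 ^ 2 := by rw [← exp_nat_mul]; norm_num
    _ ≤ 8 := by nlinarith [exp_one_lt_d9, exp_pos 1]

noncomputable def brendleRatio (n m : ℕ) : ℝ :=
  (m : ℝ) * ballVol m / (((n : ℝ) + m) * ballVol (n + m))

lemma Cnm_eq (n m : ℕ) :
    Cnm n m = max (1 / (n : ℝ) * brendleRatio n m ^ ((1 : ℝ) / n))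
      (1 / ((n : ℝ) * ballVol n ^ ((1 : ℝ) / n))) := rfl

lemma ballVol_pos (k : ℕ) : 0 < ballVol k :=
  div_pos (rpow_pos_of_pos pi_pos _) (Gamma_pos_of_pos (by positivity))

lemma ballVol_div_ballVol_add (n m : ℕ) :
    ballVol m / ballVol (n + m) =
      π ^ (-(n : ℝ) / 2) * (Gamma ((m : ℝ) / 2 + 1 + n / 2) / Gamma ((m : ℝ) / 2 + 1)) := by
  have hπ : π ^ ((m : ℝ) / 2) = π ^ (-(n : ℝ) / 2) * π ^ (((n + m : ℕ) : ℝ) / 2) := by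
    rw [← rpow_add pi_pos]; push_cast; ring_nf
  have hΓ : Gamma ((m : ℝ) / 2 + 1 + n / 2) = Gamma (((n + m : ℕ) : ℝ) / 2 + 1) := by
    push_cast; ring_nf
  have := Gamma_pos_of_pos (s := (m : ℝ) / 2 + 1) (by positivity)
  have := Gamma_pos_of_pos (s := ((n + m : ℕ) : ℝ) / 2 + 1) (by positivity)
  have := rpow_pos_of_pos pi_pos (((n + m : ℕ) : ℝ) / 2)
  unfold ballVol
  rw [hπ, hΓ]
  field_simp

lemma brendleRatio_eq (n m : ℕ) :
    brendleRatio n m =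
      π ^ (-(n : ℝ) / 2) *
        (m / (n + m) * (Gamma ((m : ℝ) / 2 + 1 + n / 2) / Gamma ((m : ℝ) / 2 + 1))) := by
  rw [brendleRatio, mul_div_mul_comm, ballVol_div_ballVol_add]; ring

lemma brendleRatio_mul_ballVol_lt {n m : ℕ} (hn : 2 ≤ n)
    (hm : 2 * m ≤ n * (3 * n ^ 2 + 14 * n + 9)) :
    brendleRatio n m * ballVol n <
      (n * 4 ^ (n + 1)) ^ n := by
  have hN : (2 : ℝ) ≤ n := by exact_mod_cast hn
  have hx : (0 : ℝ) < m / 2 + 1 := by positivity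
  have hΓx := Gamma_pos_of_pos hx
  have hΓn : 1 ≤ Gamma ((n : ℝ) / 2 + 1) := one_le_Gamma_of_two_le (by linarith)
  have hπ : π ^ (-(n : ℝ) / 2) * π ^ ((n : ℝ) / 2) = 1 := by
    rw [← rpow_add pi_pos, neg_div, neg_add_cancel, rpow_zero]
  have hsqrt : √((m : ℝ) / 2 + 1 + n / 2) < n * 4 ^ (n + 1) := by
    rw [sqrt_lt' (by positivity)]
    have hmR : 2 * (m : ℝ) ≤ n * (3 * n ^ 2 + 14 * n + 9) := by exact_mod_cast hm
    have h16 : (n : ℝ) < 16 ^ n := by exact_mod_cast Nat.lt_pow_self (by norm_num : 1 < 16)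
    have hsq : ((n : ℝ) * 4 ^ (n + 1)) ^ 2 = n ^ 2 * 16 * 16 ^ n := by
      rw [mul_pow, ← pow_mul, pow_mul']; norm_num; ring
    rw [hsq]
    nlinarith [mul_lt_mul_of_pos_left h16 (by positivity : (0 : ℝ) < 16 * n ^ 2)]
  calc brendleRatio n m * ballVol n
      = m / (n + m) * (Gamma ((m : ℝ) / 2 + 1 + n / 2) / Gamma ((m : ℝ) / 2 + 1)) /
          Gamma ((n : ℝ) / 2 + 1) := by
        rw [brendleRatio_eq, ballVol]
        linear_combination (m / (n + m) * (Gamma ((m : ℝ) / 2 + 1 + n / 2) /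
          Gamma ((m : ℝ) / 2 + 1)) / Gamma ((n : ℝ) / 2 + 1)) * hπ
    _ ≤ Gamma ((m : ℝ) / 2 + 1 + n / 2) / Gamma ((m : ℝ) / 2 + 1) := by
        have hfrac : (m : ℝ) / (n + m) ≤ 1 := div_le_one_of_le₀ (by linarith) (by positivity)
        have : 0 ≤ Gamma ((m : ℝ) / 2 + 1 + n / 2) / Gamma ((m : ℝ) / 2 + 1) :=
          div_nonneg (Gamma_pos_of_pos (by positivity)).le hΓx.le
        rw [div_le_iff₀ (by linarith)]
        nlinarith
    _ ≤ √((m : ℝ) / 2 + 1 + n / 2) ^ n := by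
        rw [div_le_iff₀ hΓx, mul_comm]; exact Gamma_add_half_nat_le hx n
    _ < (n * 4 ^ (n + 1)) ^ n := by gcongr

lemma MS_gt_Cnm {n m : ℕ} (hn : 2 ≤ n) (hm : 2 * m ≤ n * (3 * n ^ 2 + 14 * n + 9)) :
    MS n > Cnm n m := by
  have hN : (2 : ℝ) ≤ n := by exact_mod_cast hn
  have hv := ballVol_pos n
  have hv' : 0 < ballVol n ^ ((1 : ℝ) / n) := rpow_pos_of_pos hv _
  have hT : 0 ≤ brendleRatio n m :=
    div_nonneg (mul_nonneg m.cast_nonneg (ballVol_pos m).le)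
      (mul_nonneg (by positivity) (ballVol_pos (n + m)).le)
  rw [MS, Cnm_eq]
  apply max_lt
  · have hroot : brendleRatio n m ^ ((1 : ℝ) / n) *
        ballVol n ^ ((1 : ℝ) / n) < n * 4 ^ (n + 1) := by
      rw [← mul_rpow hT hv.le, one_div, rpow_inv_lt_iff_of_pos (mul_nonneg hT hv.le)
        (by positivity) (by positivity), rpow_natCast]
      exact brendleRatio_mul_ballVol_lt hn hm
    rw [lt_div_iff₀ hv', mul_assoc, one_div_mul_eq_div, div_lt_iff₀' (by positivity)]
    exact hroot
  · rw [div_mul_eq_div_div, div_lt_div_iff_of_pos_right hv']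
    calc 1 / (n : ℝ) < 1 := by rw [div_lt_one (by positivity)]; linarith
      _ ≤ 4 ^ (n + 1) := one_le_pow₀ (by norm_num)

lemma S2_eq {n : ℕ} (hn : 3 ≤ n) :
    S2 n = 1 / n * (π ^ (-(n : ℝ) / 2) *
      ((((n : ℝ) - 1) / ((n : ℝ) - 2)) ^ n * (Gamma n / Gamma ((n : ℝ) / 2)))) ^
        (1 / (n : ℝ)) := by
  have hN : (3 : ℝ) ≤ n := by exact_mod_cast hn
  have hc : 0 ≤ ((n : ℝ) - 1) / ((n : ℝ) - 2) := div_nonneg (by linarith) (by linarith)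
  have hR : 0 ≤ Gamma n / Gamma ((n : ℝ) / 2) :=
    div_nonneg (Gamma_pos_of_pos (by linarith)).le (Gamma_pos_of_pos (by linarith)).le
  rw [mul_rpow (rpow_nonneg pi_pos.le _) (mul_nonneg (pow_nonneg hc n) hR), mul_rpow
    (pow_nonneg hc n) hR, ← rpow_mul pi_pos.le, one_div (n : ℝ),
    pow_rpow_inv_natCast hc (by omega), S2]
  have hd : (n : ℝ) - 2 ≠ 0 := by linarith
  field_simp

lemma pow_mul_Gamma_div_lt {n m : ℕ} (hn : 3 ≤ n) (hm : 3 * n * (n + 3) ≤ 2 * m) :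
    (((n : ℝ) - 1) / ((n : ℝ) - 2)) ^ n * (Gamma n / Gamma ((n : ℝ) / 2)) <
      m / (n + m) * (Gamma ((m : ℝ) / 2 + 1 + n / 2) / Gamma ((m : ℝ) / 2 + 1)) := by
  have hN : (3 : ℝ) ≤ n := by exact_mod_cast hn
  have hmR : 3 * (n : ℝ) * (n + 3) ≤ 2 * m := by exact_mod_cast hm
  have hupper : Gamma n / Gamma ((n : ℝ) / 2) ≤ √(n : ℝ) ^ n := by
    have h := Gamma_add_half_nat_le (x := (n : ℝ) / 2) (by positivity) n
    rw [add_halves] at h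
    rwa [div_le_iff₀ (Gamma_pos_of_pos (by positivity)), mul_comm]
  have hlower : √((m : ℝ) / 2 + 1 - 1 / 2) ^ n ≤
      Gamma ((m : ℝ) / 2 + 1 + n / 2) / Gamma ((m : ℝ) / 2 + 1) := by
    rw [le_div_iff₀ (Gamma_pos_of_pos (by positivity)), mul_comm]
    exact Gamma_mul_sqrt_pow_le_Gamma_add_half_nat
      (by linarith [(by positivity : (0 : ℝ) ≤ m / 2)]) n
  -- `m ≥ 9n` gives `m/(n+m) ≥ 9/10` and `m/2 + 1/2 ≥ 9n/2`; `(9/10) (9/2)^{3/2} ≈ 8.6 > 8`.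
  have hfrac : 9 / 10 ≤ (m : ℝ) / (n + m) := by
    rw [le_div_iff₀ (by positivity)]; nlinarith
  have hsqrt : √(9 / 2 : ℝ) * √(n : ℝ) ≤ √((m : ℝ) / 2 + 1 - 1 / 2) := by
    rw [← sqrt_mul (by norm_num)]; gcongr; nlinarith
  have hs : (2.1 : ℝ) ≤ √(9 / 2) := by rw [le_sqrt (by norm_num) (by norm_num)]; norm_num
  have hnum : 8 * √(n : ℝ) ^ n < 9 / 10 * √((m : ℝ) / 2 + 1 - 1 / 2) ^ n := by
    have h3 : √(9 / 2 : ℝ) ^ 3 ≤ √(9 / 2) ^ n := pow_le_pow_right₀ (by linarith) hn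
    have hcube : √(9 / 2 : ℝ) ^ 3 = 9 / 2 * √(9 / 2) := by
      rw [pow_succ, sq_sqrt (by norm_num)]
    have := pow_pos (sqrt_pos.2 (show (0 : ℝ) < n by positivity)) n
    calc 8 * √(n : ℝ) ^ n < 9 / 10 * √(9 / 2 : ℝ) ^ 3 * √(n : ℝ) ^ n := by
          gcongr; nlinarith
      _ ≤ 9 / 10 * (√(9 / 2 : ℝ) * √(n : ℝ)) ^ n := by rw [mul_pow, ← mul_assoc]; gcongr
      _ ≤ 9 / 10 * √((m : ℝ) / 2 + 1 - 1 / 2) ^ n := by gcongr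
  calc (((n : ℝ) - 1) / ((n : ℝ) - 2)) ^ n * (Gamma n / Gamma ((n : ℝ) / 2))
      ≤ 8 * √(n : ℝ) ^ n :=
        mul_le_mul (sub_one_div_sub_two_pow_le_eight hn) hupper
          (div_nonneg (Gamma_pos_of_pos (by positivity)).le (Gamma_pos_of_pos (by positivity)).le)
          (by norm_num)
    _ < 9 / 10 * √((m : ℝ) / 2 + 1 - 1 / 2) ^ n := hnum
    _ ≤ m / (n + m) * (Gamma ((m : ℝ) / 2 + 1 + n / 2) / Gamma ((m : ℝ) / 2 + 1)) := by
        gcongr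

lemma Cnm_gt_S2 {n m : ℕ} (hn : 3 ≤ n) (hm : 3 * n * (n + 3) ≤ 2 * m) : Cnm n m > S2 n := by
  have hN : (3 : ℝ) ≤ n := by exact_mod_cast hn
  have hπ : 0 < π ^ (-(n : ℝ) / 2) := rpow_pos_of_pos pi_pos _
  have h0 : 0 ≤ (((n : ℝ) - 1) / ((n : ℝ) - 2)) ^ n * (Gamma n / Gamma ((n : ℝ) / 2)) :=
    mul_nonneg (pow_nonneg (div_nonneg (by linarith) (by linarith)) n)
      (div_nonneg (Gamma_pos_of_pos (by positivity)).le (Gamma_pos_of_pos (by positivity)).le)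
  rw [S2_eq hn, Cnm_eq, gt_iff_lt]
  refine lt_of_lt_of_le ?_ (le_max_left _ _)
  rw [brendleRatio_eq]
  have hlt := mul_lt_mul_of_pos_left (pow_mul_Gamma_div_lt hn hm) hπ
  have hroot := rpow_lt_rpow (mul_nonneg hπ.le h0) hlt (by positivity : (0 : ℝ) < 1 / n)
  exact mul_lt_mul_of_pos_left hroot (by positivity)

lemma S2_gt_AT2 {n : ℕ} (hn : 3 ≤ n) : S2 n > AT2 n := by
  have hN : (3 : ℝ) ≤ n := by exact_mod_cast hn
  have hp : (0 : ℝ) < n * (n - 2) := by nlinarith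
  have hR : 0 < (Gamma n / Gamma ((n : ℝ) / 2)) ^ ((1 : ℝ) / n) :=
    rpow_pos_of_pos (div_pos (Gamma_pos_of_pos (by linarith)) (Gamma_pos_of_pos (by linarith))) _
  have hlt : ((n : ℝ) * (n - 2)) ^ (-(1 : ℝ) / 2) < (n - 1) / (n * (n - 2)) := by
    have hs : √((n : ℝ) * (n - 2)) < n - 1 := by
      rw [sqrt_lt' (by linarith)]; nlinarith
    rw [neg_div, rpow_neg hp.le, ← sqrt_eq_rpow, inv_eq_one_div,
      div_lt_div_iff₀ (sqrt_pos.2 hp) hp, one_mul]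
    calc (n : ℝ) * (n - 2) = √((n : ℝ) * (n - 2)) * √((n : ℝ) * (n - 2)) :=
          (mul_self_sqrt hp.le).symm
      _ < (n - 1) * √((n : ℝ) * (n - 2)) := by gcongr
  unfold S2 AT2
  rw [mul_div_assoc]
  gcongr

theorem stmt_12 (n mn : ℕ) (hn : 3 ≤ n)
    (hmn : 2 * mn = 3 * n * (n + 3) ∨ 2 * mn = n * (3 * n ^ 2 + 14 * n + 9)) :
    MS n > Cnm n mn ∧ Cnm n mn > S2 n ∧ S2 n > AT2 n := by
  have hlower : 3 * n * (n + 3) ≤ 2 * mn := by rcases hmn with h | h <;> nlinarith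
  have hupper : 2 * mn ≤ n * (3 * n ^ 2 + 14 * n + 9) := by rcases hmn with h | h <;> nlinarith
  exact ⟨MS_gt_Cnm (by omega) hupper, Cnm_gt_S2 hn hlower, S2_gt_AT2 hn⟩
end

section
/- Let n ≥ 2 be an integer and for each positive integer k let ω_k = π^{k/2}/Γ(k/2 + 1) be the volume of the unit ball in ℝ^k. Then: (i) (n+1) ω_{n+1} > 2 ω_n; (ii) (n+2) ω_{n+2} = 2π ω_n; and (iii) for every integer m ≥ 3, (n+m) ω_{n+m} < m ω_m ω_n. Consequently, max{ m ω_m / ((n+m) ω_{n+m}), 1/ω_n } equals 1/ω_n if m ∈ {1,2} and equals m ω_m / ((n+m) ω_{n+m}) if m ≥ 3. -/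
open Real

lemma add_two_mul_ballVol_add_two (k : ℕ) :
    ((k : ℝ) + 2) * ballVol (k + 2) = 2 * π * ballVol k := by
  have hΓ : Gamma ((k : ℝ) / 2 + 1) ≠ 0 := (Gamma_pos_of_pos (by positivity)).ne'
  have hk : ((k + 2 : ℕ) : ℝ) / 2 = (k : ℝ) / 2 + 1 := by push_cast; ring
  unfold ballVol
  rw [hk, Gamma_add_one (by positivity), rpow_add pi_pos, rpow_one]
  field_simp

lemma ballVol_add_two (k : ℕ) : ballVol (k + 2) = 2 * π * ballVol k / ((k : ℝ) + 2) := by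
  rw [← add_two_mul_ballVol_add_two, mul_div_cancel_left₀ _ (by positivity)]

lemma ballVol_zero : ballVol 0 = 1 := by
  simp [ballVol]

lemma ballVol_one : ballVol 1 = 2 := by
  have hπ : √π ≠ 0 := (sqrt_pos.mpr pi_pos).ne'
  unfold ballVol
  rw [Nat.cast_one, Gamma_add_one one_half_pos.ne', Gamma_one_half_eq, ← sqrt_eq_rpow]
  field_simp

lemma ballVol_two : ballVol 2 = π := by
  simp [ballVol_add_two 0, ballVol_zero]

lemma ballVol_add_two_lt {n : ℕ} (hn : 1 ≤ n) : ballVol (n + 2) < ballVol n * ballVol 2 := by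
  have hn' : (1 : ℝ) ≤ n := by exact_mod_cast hn
  rw [ballVol_add_two, ballVol_two, div_lt_iff₀ (by positivity)]
  nlinarith [mul_pos pi_pos (ballVol_pos n)]

lemma ballVol_add_add_two_lt {n m : ℕ} (h : ballVol (n + m) < ballVol n * ballVol m) :
    ballVol (n + (m + 2)) < ballVol n * ballVol (m + 2) := by
  have hω := ballVol_pos (n + m)
  rw [← add_assoc, ballVol_add_two, ballVol_add_two, mul_div_assoc', ← mul_left_comm]
  calc 2 * π * ballVol (n + m) / ((n + m : ℕ) + 2)
      < 2 * π * (ballVol n * ballVol m) / ((n + m : ℕ) + 2) := by gcongr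
    _ ≤ 2 * π * (ballVol n * ballVol m) / ((m : ℝ) + 2) := by
      have := mul_pos (ballVol_pos n) (ballVol_pos m)
      gcongr
      exact_mod_cast Nat.le_add_left m n

lemma ballVol_add_one_lt : ∀ {n : ℕ}, 1 ≤ n → ballVol (n + 1) < ballVol n * ballVol 1
  | 1, _ => by rw [ballVol_one, ballVol_two]; linarith [pi_lt_four]
  | 2, _ => by simpa only [mul_comm] using ballVol_add_two_lt le_rfl
  | n + 3, _ => by
    have h := ballVol_add_add_two_lt (n := 1) (m := n + 1) <| by
      rw [add_comm, mul_comm]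
      exact ballVol_add_one_lt (by omega)
    rwa [add_comm 1, mul_comm] at h

lemma ballVol_add_lt_mul {n : ℕ} (hn : 1 ≤ n) : ∀ {m : ℕ}, 1 ≤ m →
    ballVol (n + m) < ballVol n * ballVol m
  | 1, _ => ballVol_add_one_lt hn
  | 2, _ => ballVol_add_two_lt hn
  | m + 3, _ => ballVol_add_add_two_lt (ballVol_add_lt_mul hn (by omega : 1 ≤ m + 1))

lemma two_mul_ballVol_lt {n : ℕ} (hn : 1 ≤ n) : 2 * ballVol n < ((n : ℝ) + 1) * ballVol (n + 1) := by
  obtain ⟨k, rfl⟩ := Nat.exists_eq_add_of_le' hn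
  have hk : ballVol (k + 1) ≤ 2 * ballVol k := by
    rcases k.eq_zero_or_pos with rfl | hk
    · simp [ballVol_zero, ballVol_one]
    · simpa only [ballVol_one, mul_comm] using (ballVol_add_lt_mul hk le_rfl).le
  calc 2 * ballVol (k + 1) ≤ 4 * ballVol k := by linarith
    _ < 2 * π * ballVol k := mul_lt_mul_of_pos_right (by linarith [pi_gt_three]) (ballVol_pos k)
    _ = ((k + 1 : ℕ) + 1) * ballVol (k + 1 + 1) := by
      rw [← add_two_mul_ballVol_add_two]
      push_cast
      ring

lemma add_mul_ballVol_add_lt {n m : ℕ} (hn : 1 ≤ n) (hm : 3 ≤ m) :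
    ((n : ℝ) + m) * ballVol (n + m) < (m : ℝ) * ballVol m * ballVol n := by
  obtain ⟨k, rfl⟩ := Nat.exists_eq_add_of_le' (by omega : 2 ≤ m)
  have h := ballVol_add_lt_mul hn (by omega : 1 ≤ k)
  have h₁ := add_two_mul_ballVol_add_two (n + k)
  have h₂ := add_two_mul_ballVol_add_two k
  push_cast at h₁ h₂ ⊢
  simp only [← add_assoc]
  rw [h₁, h₂]
  linarith [mul_lt_mul_of_pos_left h two_pi_pos]

theorem stmt_16 (n : ℕ) (hn : 2 ≤ n) :
    (2 * ballVol n < ((n : ℝ) + 1) * ballVol (n + 1)) ∧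
    (((n : ℝ) + 2) * ballVol (n + 2) = 2 * Real.pi * ballVol n) ∧
    (∀ m : ℕ, 3 ≤ m → ((n : ℝ) + m) * ballVol (n + m) < (m : ℝ) * ballVol m * ballVol n) ∧
    (∀ m : ℕ, 1 ≤ m →
      ((m = 1 ∨ m = 2) →
          max ((m : ℝ) * ballVol m / (((n : ℝ) + m) * ballVol (n + m))) (1 / ballVol n) =
            1 / ballVol n) ∧
      (3 ≤ m →
          max ((m : ℝ) * ballVol m / (((n : ℝ) + m) * ballVol (n + m))) (1 / ballVol n) =
            (m : ℝ) * ballVol m / (((n : ℝ) + m) * ballVol (n + m)))) := by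
  have hn₁ : 1 ≤ n := by omega
  have hω := ballVol_pos n
  have hden (m : ℕ) : 0 < ((n : ℝ) + m) * ballVol (n + m) := by
    have := ballVol_pos (n + m)
    positivity
  refine ⟨two_mul_ballVol_lt hn₁, add_two_mul_ballVol_add_two n,
    fun m hm => add_mul_ballVol_add_lt hn₁ hm, fun m _ => ⟨?_, fun hm => ?_⟩⟩
  · rintro (rfl | rfl) <;> apply max_eq_right <;>
      rw [div_le_div_iff₀ (hden _) hω, one_mul]
    · simpa [ballVol_one] using (two_mul_ballVol_lt hn₁).le
    · push_cast
      rw [ballVol_two]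
      linarith [add_two_mul_ballVol_add_two n]
  · apply max_eq_left
    rw [div_le_div_iff₀ hω (hden m), one_mul]
    exact (add_mul_ballVol_add_lt hn₁ hm).le
end
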